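/- arXiv:1902.00151 — 2 statements merged into one kernel-verified Lean document; each statement's English description precedes it below -/
import Mathlib

section
/- Let ρ > 0, n ≥ 1, w ∈ ℝⁿ with wᵢ > 0 for all i, and a ∈ ℝⁿ with aᵢ ≥ 0 for all i, with the ratios aᵢ/wᵢ nonincreasing in i. Define sᵢ, Lᵢ, αᵢ as usual. Suppose k ∈ {1,…,n} satisfies a_k/w_k ≥ 2ρα_k, and either k = n or 2ρα_k > a_{k+1}/w_{k+1}. Then α_k ≥ αᵢ for every i ∈ {1,…,n}; that is, α_k = max_{1≤i≤n} αᵢ. -/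
/-!
Write `βᵢ = 2ρ αᵢ` and `rᵢ = aᵢ / wᵢ`. Then
`β_{i+1} = (2ρ s_i + 2ρ w_{i+1} a_{i+1}) / ((1 + 2ρ L_i) + 2ρ w_{i+1}²)`
is the mediant of `β_i = 2ρ s_i / (1 + 2ρ L_i)` and
`r_{i+1} = 2ρ w_{i+1} a_{i+1} / (2ρ w_{i+1}²)`,
so each step moves `β` a fraction `t ∈ (0, 1)` of the way towards the next ratio. Hence `β`
increases as long as it stays below `r`, while once it exceeds the nonincreasing sequence `r` it
stays above it and decreases. The two hypotheses on `k` say that this switch happens at `k`.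
-/

open Finset Order

lemma exists_add_div_add_eq_convex_comb {a b c d : ℝ} (hb : 0 < b) (hd : 0 < d) :
    ∃ t ∈ Set.Ioo (0 : ℝ) 1, (a + c) / (b + d) = (1 - t) * (a / b) + t * (c / d) :=
  ⟨d / (b + d), ⟨by positivity, (div_lt_one (by positivity)).2 (by linarith)⟩, by
    field_simp
    ring⟩

section StepsToward

variable {ι : Type*} [LinearOrder ι] {β r : ι → ℝ} {i j k : ι}

def StepsToward (β r : ι → ℝ) : Prop :=
  ∀ ⦃i j⦄, i ⋖ j → ∃ t ∈ Set.Ico (0 : ℝ) 1, β j = (1 - t) * β i + t * r j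

namespace StepsToward

theorem le_of_le_target (h : StepsToward β r) (hij : i ⋖ j) (hj : β j ≤ r j) :
    β i ≤ β j := by
  obtain ⟨t, ⟨ht0, ht1⟩, hβ⟩ := h hij
  nlinarith

theorem le_of_target_le (h : StepsToward β r) (hij : i ⋖ j) (hj : r j ≤ β j) :
    β j ≤ β i := by
  obtain ⟨t, ⟨ht0, ht1⟩, hβ⟩ := h hij
  nlinarith

theorem target_lt_of_target_lt (h : StepsToward β r) (hij : i ⋖ j) (hj : r j < β i) :
    r j < β j := by
  obtain ⟨t, ⟨ht0, ht1⟩, hβ⟩ := h hij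
  nlinarith

variable [SuccOrder ι] [IsSuccArchimedean ι]

theorem target_lt_of_le (h : StepsToward β r) (hr : Antitone r) (hi : r i < β i)
    (hij : i ≤ j) : r j < β j := by
  induction hij using Succ.rec with
  | rfl => exact hi
  | succ j _ ih =>
    by_cases hj : IsMax j
    · rwa [hj.succ_eq]
    · have hcov := covBy_succ_of_not_isMax hj
      exact h.target_lt_of_target_lt hcov ((hr hcov.le).trans_lt ih)

theorem monotoneOn_Iic (h : StepsToward β r) (hr : Antitone r) (hk : β k ≤ r k) :
    MonotoneOn β (Set.Iic k) :=
  monotoneOn_of_le_succ Set.ordConnected_Iic fun _ hl _ hlk =>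
    h.le_of_le_target (covBy_succ_of_not_isMax hl)
      (not_lt.1 fun hlt => (h.target_lt_of_le hr hlt hlk).not_ge hk)

theorem antitoneOn_Ici (h : StepsToward β r) (hr : Antitone r) (hk : ∀ l, k ⋖ l → r l < β k) :
    AntitoneOn β (Set.Ici k) :=
  antitoneOn_of_succ_le Set.ordConnected_Ici fun l hl hkl _ => by
    have hk' : ¬IsMax k := fun hmax => hl (hmax.mono hkl)
    have hcov := covBy_succ_of_not_isMax hk'
    have hnext := h.target_lt_of_le hr (h.target_lt_of_target_lt hcov (hk _ hcov))
      (succ_le_succ hkl)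
    exact h.le_of_target_le (covBy_succ_of_not_isMax hl) hnext.le

theorem apply_le (h : StepsToward β r) (hr : Antitone r) (hk : β k ≤ r k)
    (hk' : ∀ l, k ⋖ l → r l < β k) (i : ι) : β i ≤ β k := by
  rcases le_total i k with hik | hki
  · exact h.monotoneOn_Iic hr hk hik le_rfl hik
  · exact h.antitoneOn_Ici hr hk' le_rfl hki hki

end StepsToward

end StepsToward

section PrefixRatio

variable {ι : Type*} [LinearOrder ι] [LocallyFiniteOrderBot ι]

theorem Finset.sum_Iic_of_covBy {M : Type*} [AddCommMonoid M] (f : ι → M) {i j : ι}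
    (hij : i ⋖ j) : ∑ x ∈ Iic j, f x = ∑ x ∈ Iic i, f x + f j := by
  have hIio : Iio j = Iic i := coe_injective (by simpa using hij.Iio_eq)
  rw [Iic_eq_cons_Iio, sum_cons, hIio, add_comm]

noncomputable def prefixRatio (ρ : ℝ) (w a : ι → ℝ) (i : ι) : ℝ :=
  (∑ j ∈ Iic i, w j * a j) / (1 + 2 * ρ * ∑ j ∈ Iic i, w j ^ 2)

theorem stepsToward_prefixRatio {ρ : ℝ} (hρ : 0 < ρ) {w : ι → ℝ} (hw : ∀ i, 0 < w i)
    (a : ι → ℝ) :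
    StepsToward (fun i => 2 * ρ * prefixRatio ρ w a i) (fun i => a i / w i) := by
  intro i j hij
  simp only [prefixRatio, sum_Iic_of_covBy _ hij]
  set s := ∑ x ∈ Iic i, w x * a x
  set L := ∑ x ∈ Iic i, w x ^ 2
  have hL : 0 ≤ L := sum_nonneg fun x _ => sq_nonneg (w x)
  have hwj := hw j
  obtain ⟨t, ht, hmed⟩ := exists_add_div_add_eq_convex_comb (a := 2 * ρ * s)
    (c := 2 * ρ * (w j * a j)) (b := 1 + 2 * ρ * L) (d := 2 * ρ * w j ^ 2)
    (by positivity) (by positivity)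
  refine ⟨t, Set.Ioo_subset_Ico_self ht, ?_⟩
  have hlhs : 2 * ρ * ((s + w j * a j) / (1 + 2 * ρ * (L + w j ^ 2))) =
      (2 * ρ * s + 2 * ρ * (w j * a j)) / (1 + 2 * ρ * L + 2 * ρ * w j ^ 2) := by
    ring
  have hratio : 2 * ρ * (w j * a j) / (2 * ρ * w j ^ 2) = a j / w j := by
    field_simp
  rw [hlhs, hmed, hratio, mul_div_assoc]

end PrefixRatio

theorem stmt1_general (n : ℕ) (ρ : ℝ) (hρ : 0 < ρ)
    (w a : Fin n → ℝ) (hw : ∀ i, 0 < w i)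
    (hmono : ∀ i j : Fin n, i ≤ j → a j / w j ≤ a i / w i)
    (α : Fin n → ℝ)
    (hα : ∀ i, α i = (∑ j ∈ Finset.Iic i, w j * a j) /
        (1 + 2 * ρ * ∑ j ∈ Finset.Iic i, (w j) ^ 2))
    (k : Fin n)
    (hk1 : 2 * ρ * α k ≤ a k / w k)
    (hk2 : (k : ℕ) + 1 = n ∨
      ∃ h : (k : ℕ) + 1 < n, a ⟨(k : ℕ) + 1, h⟩ / w ⟨(k : ℕ) + 1, h⟩ < 2 * ρ * α k) :
    ∀ i, α i ≤ α k := by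
  obtain rfl : α = prefixRatio ρ w a := funext hα
  have hnext : ∀ l, k ⋖ l → a l / w l < 2 * ρ * prefixRatio ρ w a k := by
    intro l hkl
    have hl : (k : ℕ) + 1 = l := by simpa using hkl
    rcases hk2 with hlast | ⟨h, hlt⟩
    · exact absurd l.isLt (by omega)
    · obtain rfl : l = ⟨(k : ℕ) + 1, h⟩ := Fin.ext hl.symm
      exact hlt
  intro i
  exact le_of_mul_le_mul_left
    ((stepsToward_prefixRatio hρ hw a).apply_le hmono hk1 hnext i) (by positivity)

theorem stmt1 (n : ℕ) (hn : 0 < n) (ρ : ℝ) (hρ : 0 < ρ)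
    (w a : Fin n → ℝ) (hw : ∀ i, 0 < w i) (ha : ∀ i, 0 ≤ a i)
    (hmono : ∀ i j : Fin n, i ≤ j → a j / w j ≤ a i / w i)
    (α : Fin n → ℝ)
    (hα : ∀ i, α i = (∑ j ∈ Finset.Iic i, w j * a j) /
        (1 + 2 * ρ * ∑ j ∈ Finset.Iic i, (w j) ^ 2))
    (k : Fin n)
    (hk1 : 2 * ρ * α k ≤ a k / w k)
    (hk2 : (k : ℕ) + 1 = n ∨
      ∃ h : (k : ℕ) + 1 < n, a ⟨(k : ℕ) + 1, h⟩ / w ⟨(k : ℕ) + 1, h⟩ < 2 * ρ * α k) :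
    ∀ i, α i ≤ α k :=
  stmt1_general n ρ hρ w a hw hmono α hα k hk1 hk2
end

section
/- Let n ≥ 1, ρ > 0, w ∈ ℝⁿ, and let Σ ∈ ℝ^{n×n} be a diagonal matrix whose diagonal entries all belong to {0, 1}. Set ŵ = Σw and M = Σ − (2ρ/(1 + 2ρ ŵᵀŵ)) ŵŵᵀ. Then M is symmetric positive semidefinite and I − M is positive semidefinite; that is, 0 ≤ xᵀMx ≤ xᵀx for all x ∈ ℝⁿ. -/
/-!
The diagonal 0/1 matrix `Σ` is an orthogonal projection and fixes `ŵ = Σ w`, so with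
`c = 2ρ / (1 + 2ρ ‖ŵ‖²)` the quadratic form is `xᵀ M x = ‖Σ x‖² - c (ŵ ⬝ Σ x)²`.
Cauchy–Schwarz bounds `(ŵ ⬝ Σ x)²` by `‖ŵ‖² ‖Σ x‖²`, and `c ‖ŵ‖² ≤ 1`, which gives `0 ≤ xᵀ M x`;
the upper bound follows from `‖Σ x‖² ≤ ‖x‖²`.
-/

open Matrix

namespace Matrix

section CommSemiring

variable {ι R : Type*} [Fintype ι] [CommSemiring R]

lemma isIdempotentElem_diagonal [DecidableEq ι] {d : ι → R} (hd : ∀ i, IsIdempotentElem (d i)) :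
    IsIdempotentElem (diagonal d) := by
  rw [IsIdempotentElem, diagonal_mul_diagonal]
  exact congrArg diagonal (funext hd)

lemma dotProduct_vecMulVec_self_mulVec (v x : ι → R) :
    x ⬝ᵥ (vecMulVec v v *ᵥ x) = (v ⬝ᵥ x) ^ 2 := by
  rw [vecMulVec_mulVec, op_smul_eq_smul, dotProduct_smul, smul_eq_mul, dotProduct_comm x v, sq]

lemma dotProduct_mulVec_of_mulVec_eq_self {P : Matrix ι ι R} (hPt : Pᵀ = P) {v : ι → R}
    (hv : P *ᵥ v = v) (x : ι → R) : v ⬝ᵥ (P *ᵥ x) = v ⬝ᵥ x := by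
  rw [dotProduct_mulVec, ← mulVec_transpose, hPt, hv]

lemma dotProduct_mulVec_eq_mulVec_dotProduct_mulVec {P : Matrix ι ι R} (hPt : Pᵀ = P)
    (hP : IsIdempotentElem P) (x : ι → R) : x ⬝ᵥ (P *ᵥ x) = (P *ᵥ x) ⬝ᵥ (P *ᵥ x) := by
  rw [dotProduct_mulVec (P *ᵥ x), ← mulVec_transpose, hPt, mulVec_mulVec, hP.eq, dotProduct_comm]

end CommSemiring

section LinearOrderedCommRing

variable {ι R : Type*} [Fintype ι] [CommRing R] [LinearOrder R] [IsStrictOrderedRing R]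

lemma dotProduct_self_nonneg (v : ι → R) : 0 ≤ v ⬝ᵥ v :=
  Finset.sum_nonneg fun i _ => mul_self_nonneg (v i)

lemma sq_dotProduct_le (u v : ι → R) : (u ⬝ᵥ v) ^ 2 ≤ (u ⬝ᵥ u) * (v ⬝ᵥ v) := by
  simpa only [dotProduct, sq] using Finset.sum_mul_sq_le_sq_mul_sq Finset.univ u v

lemma dotProduct_mulVec_le_dotProduct_self {P : Matrix ι ι R} (hPt : Pᵀ = P)
    (hP : IsIdempotentElem P) (x : ι → R) : x ⬝ᵥ (P *ᵥ x) ≤ x ⬝ᵥ x := by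
  have hsq := dotProduct_self_nonneg (x - P *ᵥ x)
  have hPx := dotProduct_mulVec_eq_mulVec_dotProduct_mulVec hPt hP x
  rw [sub_dotProduct, dotProduct_sub, dotProduct_sub, dotProduct_comm (P *ᵥ x) x] at hsq
  linarith

theorem dotProduct_sub_smul_vecMulVec_mulVec_mem_Icc {P : Matrix ι ι R} (hPt : Pᵀ = P)
    (hP : IsIdempotentElem P) {v : ι → R} (hv : P *ᵥ v = v) {c : R}
    (hc : 0 ≤ c) (hcv : c * (v ⬝ᵥ v) ≤ 1) (x : ι → R) :
    0 ≤ x ⬝ᵥ ((P - c • vecMulVec v v) *ᵥ x) ∧ x ⬝ᵥ ((P - c • vecMulVec v v) *ᵥ x) ≤ x ⬝ᵥ x := by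
  have hform : x ⬝ᵥ ((P - c • vecMulVec v v) *ᵥ x) = x ⬝ᵥ (P *ᵥ x) - c * (v ⬝ᵥ x) ^ 2 := by
    rw [sub_mulVec, smul_mulVec, dotProduct_sub, dotProduct_smul, smul_eq_mul,
      dotProduct_vecMulVec_self_mulVec]
  have hPx := dotProduct_mulVec_eq_mulVec_dotProduct_mulVec hPt hP x
  have hCS : (v ⬝ᵥ x) ^ 2 ≤ (v ⬝ᵥ v) * (x ⬝ᵥ (P *ᵥ x)) := by
    rw [← dotProduct_mulVec_of_mulVec_eq_self hPt hv, hPx]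
    exact sq_dotProduct_le v (P *ᵥ x)
  have hxPx : 0 ≤ x ⬝ᵥ (P *ᵥ x) := hPx ▸ dotProduct_self_nonneg _
  rw [hform]
  constructor
  · nlinarith [mul_le_mul_of_nonneg_left hCS hc, mul_le_mul_of_nonneg_right hcv hxPx]
  · nlinarith [dotProduct_mulVec_le_dotProduct_self hPt hP x, sq_nonneg (v ⬝ᵥ x)]

end LinearOrderedCommRing

end Matrix

lemma div_one_add_mul_nonneg_and_mul_le_one {a s : ℝ} (ha : 0 ≤ a) (hs : 0 ≤ s) :
    0 ≤ a / (1 + a * s) ∧ a / (1 + a * s) * s ≤ 1 := by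
  have hden : 0 < 1 + a * s := by positivity
  refine ⟨by positivity, ?_⟩
  rw [div_mul_eq_mul_div, div_le_one hden]
  linarith

theorem stmt7_general (n : ℕ) (ρ : ℝ) (hρ : 0 < ρ)
    (w d : Fin n → ℝ) (hd : ∀ i, d i = 0 ∨ d i = 1)
    (S : Matrix (Fin n) (Fin n) ℝ) (hS : S = Matrix.diagonal d)
    (what : Fin n → ℝ) (hwhat : what = S.mulVec w)
    (M : Matrix (Fin n) (Fin n) ℝ)
    (hM : M = S - (2 * ρ / (1 + 2 * ρ * ∑ i, what i ^ 2)) • Matrix.vecMulVec what what) :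
    Mᵀ = M ∧ ∀ x : Fin n → ℝ,
      0 ≤ dotProduct x (M.mulVec x) ∧
      dotProduct x (M.mulVec x) ≤ dotProduct x x := by
  have hSt : Sᵀ = S := by rw [hS, diagonal_transpose]
  have hS_idem : IsIdempotentElem S :=
    hS ▸ isIdempotentElem_diagonal fun i => IsIdempotentElem.iff_eq_zero_or_one.mpr (hd i)
  have hwhat_fixed : S *ᵥ what = what := by rw [hwhat, mulVec_mulVec, hS_idem.eq]
  have hnorm : ∑ i, what i ^ 2 = what ⬝ᵥ what := by simp only [dotProduct, sq]
  obtain ⟨hc, hcv⟩ :=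
    div_one_add_mul_nonneg_and_mul_le_one (by positivity : 0 ≤ 2 * ρ) (dotProduct_self_nonneg what)
  refine ⟨by rw [hM, transpose_sub, transpose_smul, hSt, transpose_vecMulVec], fun x => ?_⟩
  rw [hM, hnorm]
  exact dotProduct_sub_smul_vecMulVec_mulVec_mem_Icc hSt hS_idem hwhat_fixed hc hcv x

theorem stmt7 (n : ℕ) (hn : 0 < n) (ρ : ℝ) (hρ : 0 < ρ)
    (w d : Fin n → ℝ) (hd : ∀ i, d i = 0 ∨ d i = 1)
    (S : Matrix (Fin n) (Fin n) ℝ) (hS : S = Matrix.diagonal d)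
    (what : Fin n → ℝ) (hwhat : what = S.mulVec w)
    (M : Matrix (Fin n) (Fin n) ℝ)
    (hM : M = S - (2 * ρ / (1 + 2 * ρ * ∑ i, what i ^ 2)) • Matrix.vecMulVec what what) :
    Mᵀ = M ∧ ∀ x : Fin n → ℝ,
      0 ≤ dotProduct x (M.mulVec x) ∧
      dotProduct x (M.mulVec x) ≤ dotProduct x x :=
  stmt7_general n ρ hρ w d hd S hS what hwhat M hM
end
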